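/- arXiv:2501.07509 — 3 statements merged into one kernel-verified Lean document; each statement's English description precedes it below -/
import Mathlib

section
/- Let (Ω, 𝓕, ℙ) be a probability space and let f : ℝ → ℝ be twice continuously differentiable such that for some constants C ≥ 0 and p ≥ 1 one has |f(x)| ≤ C(1+|x|^p), |f'(x)| ≤ C(1+|x|^p) and |f''(x)| ≤ C(1+|x|^p) for all x ∈ ℝ. Fix r ≥ 1 and q ≥ max(2pr, 4r). Let X and H be real random variables on Ω with E[|X|^q] < ∞ and E[|H|^q] < ∞, let (H_n) be a sequence of random variables with E[|H_n|^q] < ∞ and E[|H_n - H|^q]^{1/q} → 0, and let (t_n) be a sequence of positive real numbers with t_n → 0. Then E[ | (f(X + t_n H_n) - f(X))/t_n - f'(X)·H |^r ]^{1/r} → 0 as n → ∞. In particular, the Nemytskii map X ↦ f∘X from L^q(Ω) to L^r(Ω) is Hadamard-differentiable at X, with Hadamard derivative in the direction H equal to f'(X)·H. -/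
/-!
Taylor's formula with the polynomial bound on `f''` gives, pointwise and for `0 < t ≤ 1`,
`|(f (X + t Y) - f X) / t - f' X * Y| ≤ t C (1 + (|X| + |Y|) ^ p) Y ^ 2`.
By Hölder's inequality with exponents `(2r, 2r)` the `L^r` norm of the right-hand side is at most
`t` times a polynomial in `‖X‖_q` and `‖Y‖_q`; this is where `q ≥ max (2pr) (4r)` enters.
The error for `Y = Hₙ` is this remainder plus `f' X * (Hₙ - H)`, whose `L^r` norm is at most
`‖f' X‖_{2r} ‖Hₙ - H‖_q`; both tend to zero because `‖Hₙ‖_q` stays bounded.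
-/

open MeasureTheory Filter Topology
open scoped ENNReal

-- Mean value theorem for `y ↦ f y - (y - a) • f' a`, whose derivative `f' - f' a` is bounded
-- by `M |h|` on the ball thanks to the mean value theorem for `f'`.
theorem norm_sub_sub_smul_deriv_le {E : Type*} [NormedAddCommGroup E] [NormedSpace ℝ E]
    {f : ℝ → E} (hf : Differentiable ℝ f) (hf' : Differentiable ℝ (deriv f)) {a h M : ℝ}
    (hM : ∀ y, |y - a| ≤ |h| → ‖deriv (deriv f) y‖ ≤ M) :
    ‖f (a + h) - f a - h • deriv f a‖ ≤ M * h ^ 2 := by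
  set B := Metric.closedBall a |h|
  have haB : a ∈ B := Metric.mem_closedBall_self (abs_nonneg h)
  have hM0 : 0 ≤ M := (norm_nonneg _).trans (hM a (by simp))
  have hderiv : ∀ y ∈ B, ‖deriv f y - deriv f a‖ ≤ M * |h| := fun y hy =>
    calc ‖deriv f y - deriv f a‖ ≤ M * ‖y - a‖ :=
          (convex_closedBall a |h|).norm_image_sub_le_of_norm_deriv_le
            (fun z _ => hf' z) hM haB hy
      _ ≤ M * |h| := by gcongr; exact hy
  have key := (convex_closedBall a |h|).norm_image_sub_le_of_norm_hasDerivWithin_le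
    (f := fun y => f y - (y - a) • deriv f a) (f' := fun y => deriv f y - deriv f a)
    (fun y _ => (((hf y).hasDerivAt.sub (((hasDerivAt_id y).sub_const a).smul_const
      (deriv f a))).congr_deriv (by simp)).hasDerivWithinAt)
    hderiv haB (y := a + h) (by simp [B, dist_eq_norm])
  calc ‖f (a + h) - f a - h • deriv f a‖ ≤ M * |h| * ‖a + h - a‖ := by
        convert key using 2; simp; abel
    _ = M * h ^ 2 := by rw [add_sub_cancel_left, Real.norm_eq_abs, mul_assoc, ← sq, sq_abs]

theorem abs_slope_sub_deriv_mul_le {f : ℝ → ℝ} (hf : Differentiable ℝ f)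
    (hf' : Differentiable ℝ (deriv f)) {C p : ℝ} (hC : 0 ≤ C) (hp : 0 ≤ p)
    (hf2 : ∀ x, |deriv (deriv f) x| ≤ C * (1 + |x| ^ p)) {a h t : ℝ} (ht : 0 < t) (ht1 : t ≤ 1) :
    |(f (a + t * h) - f a) / t - deriv f a * h| ≤ t * (C * (1 + (|a| + |h|) ^ p) * h ^ 2) := by
  have hth : |t * h| ≤ |h| := by
    rw [abs_mul, abs_of_pos ht]; exact mul_le_of_le_one_left (abs_nonneg h) ht1
  have taylor := norm_sub_sub_smul_deriv_le hf hf' (a := a) (h := t * h)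
    (M := C * (1 + (|a| + |h|) ^ p)) fun y hy => by
      have hy' : |y| ≤ |a| + |h| := by
        have := abs_sub_abs_le_abs_sub y a; linarith
      grw [Real.norm_eq_abs, hf2 y, hy']
  rw [Real.norm_eq_abs, smul_eq_mul] at taylor
  calc |(f (a + t * h) - f a) / t - deriv f a * h|
      = |f (a + t * h) - f a - t * h * deriv f a| / t := by
        rw [div_sub' ht.ne', abs_div, abs_of_pos ht]; ring_nf
    _ ≤ C * (1 + (|a| + |h|) ^ p) * (t * h) ^ 2 / t := by gcongr
    _ = t * (C * (1 + (|a| + |h|) ^ p) * h ^ 2) := by field_simp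

theorem ENNReal.holderTriple_two_mul (s : ℝ≥0∞) : ENNReal.HolderTriple (2 * s) (2 * s) s where
  inv_add_inv_eq_inv := by
    rw [ENNReal.mul_inv (by simp) (by simp), ← add_mul, ENNReal.inv_two_add_inv_two, one_mul]

namespace MeasureTheory

variable {Ω : Type*} [MeasurableSpace Ω] {μ : Measure Ω}

/-- No integrability is needed: when `|f| ^ r` is not integrable both sides are junk `0`. -/
theorem integral_abs_rpow_rpow_one_div {f : Ω → ℝ} (hf : AEStronglyMeasurable f μ) {r : ℝ}
    (hr : 0 < r) :
    (∫ ω, |f ω| ^ r ∂μ) ^ (1 / r) = (eLpNorm f (ENNReal.ofReal r) μ).toReal := by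
  rw [eLpNorm_eq_lintegral_rpow_enorm_toReal (by simpa using hr) ENNReal.ofReal_ne_top,
    ENNReal.toReal_ofReal hr.le, ← ENNReal.toReal_rpow,
    integral_eq_lintegral_of_nonneg_ae (f := fun ω => |f ω| ^ r)
        (ae_of_all _ fun ω => by positivity)
      (hf.norm.aemeasurable.pow_const r).aestronglyMeasurable]
  congr 3 with ω
  rw [← ENNReal.ofReal_rpow_of_nonneg (abs_nonneg _) hr.le, Real.enorm_eq_ofReal_abs]

theorem memLp_of_integrable_abs_rpow {f : Ω → ℝ} (hf : AEStronglyMeasurable f μ) {q : ℝ}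
    (hq : 0 < q) (hint : Integrable (fun ω => |f ω| ^ q) μ) : MemLp f (ENNReal.ofReal q) μ := by
  rw [← integrable_norm_rpow_iff hf (by simpa using hq) ENNReal.ofReal_ne_top,
    ENNReal.toReal_ofReal hq.le]
  simpa only [Real.norm_eq_abs] using hint

theorem eLpNorm_mul_le_eLpNorm_two_mul {φ ψ : Ω → ℝ} (hφ : AEStronglyMeasurable φ μ)
    (hψ : AEStronglyMeasurable ψ μ) (s : ℝ≥0∞) :
    eLpNorm (fun ω => φ ω * ψ ω) s μ ≤ eLpNorm φ (2 * s) μ * eLpNorm ψ (2 * s) μ := by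
  have := ENNReal.holderTriple_two_mul s
  exact eLpNorm_smul_le_mul_eLpNorm (𝕜 := ℝ) hψ hφ

theorem eLpNorm_one_add_abs_rpow_le [IsProbabilityMeasure μ] {Y : Ω → ℝ}
    (hY : AEStronglyMeasurable Y μ) {s : ℝ≥0∞} (hs : 1 ≤ s) {p : ℝ} (hp : 0 < p) :
    eLpNorm (fun ω => 1 + |Y ω| ^ p) s μ ≤ 1 + eLpNorm Y (s * ENNReal.ofReal p) μ ^ p := by
  have hpow : eLpNorm (fun ω => |Y ω| ^ p) s μ = eLpNorm Y (s * ENNReal.ofReal p) μ ^ p := by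
    simpa only [Real.norm_eq_abs] using eLpNorm_norm_rpow (p := s) (μ := μ) Y hp
  calc eLpNorm (fun ω => 1 + |Y ω| ^ p) s μ
      ≤ eLpNorm (fun _ => (1 : ℝ)) s μ + eLpNorm (fun ω => |Y ω| ^ p) s μ :=
        eLpNorm_add_le aestronglyMeasurable_const
          (hY.norm.aemeasurable.pow_const p).aestronglyMeasurable hs
    _ ≤ 1 + eLpNorm Y (s * ENNReal.ofReal p) μ ^ p := by
        rw [hpow, eLpNorm_const (1 : ℝ) (by positivity) (IsProbabilityMeasure.ne_zero μ)]; simp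

theorem memLp_comp_of_abs_le_mul_one_add_rpow [IsProbabilityMeasure μ] {g : ℝ → ℝ}
    (hg : Continuous g) {C p : ℝ} (hp : 0 < p) (hgC : ∀ x, |g x| ≤ C * (1 + |x| ^ p))
    {Y : Ω → ℝ} {s κ : ℝ≥0∞} (hY : MemLp Y κ μ) (hs : 1 ≤ s) (hsκ : s * ENNReal.ofReal p ≤ κ) :
    MemLp (fun ω => g (Y ω)) s μ := by
  have hbound : eLpNorm (fun ω => g (Y ω)) s μ ≤ ‖C‖ₑ * (1 + eLpNorm Y κ μ ^ p) :=
    calc eLpNorm (fun ω => g (Y ω)) s μ ≤ eLpNorm (fun ω => C * (1 + |Y ω| ^ p)) s μ :=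
          eLpNorm_mono_real fun ω => hgC (Y ω)
      _ = ‖C‖ₑ * eLpNorm (fun ω => 1 + |Y ω| ^ p) s μ :=
          eLpNorm_const_smul C (fun ω => 1 + |Y ω| ^ p) s μ
      _ ≤ ‖C‖ₑ * (1 + eLpNorm Y κ μ ^ p) := by
          grw [eLpNorm_one_add_abs_rpow_le hY.1 hs hp,
            eLpNorm_le_eLpNorm_of_exponent_le hsκ hY.1]
  have := hY.eLpNorm_ne_top
  exact ⟨hg.comp_aestronglyMeasurable hY.1, hbound.trans_lt (by finiteness)⟩

theorem eLpNorm_one_add_abs_add_abs_rpow_mul_sq_le [IsProbabilityMeasure μ] {X Y : Ω → ℝ}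
    (hX : AEStronglyMeasurable X μ) (hY : AEStronglyMeasurable Y μ) {p : ℝ} (hp : 0 < p)
    {s κ : ℝ≥0∞} (hs : 1 ≤ s) (hsp : 2 * s * ENNReal.ofReal p ≤ κ) (hsκ : 2 * s * 2 ≤ κ) :
    eLpNorm (fun ω => (1 + (|X ω| + |Y ω|) ^ p) * Y ω ^ 2) s μ ≤
      (1 + (eLpNorm X κ μ + eLpNorm Y κ μ) ^ p) * eLpNorm Y κ μ ^ 2 := by
  have hκ : 1 ≤ κ := hs.trans <| (le_mul_of_one_le_left' one_le_two).trans <|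
    (le_mul_of_one_le_right' one_le_two).trans hsκ
  have hXY : AEStronglyMeasurable (fun ω => |X ω| + |Y ω|) μ := hX.norm.add hY.norm
  have hfirst : eLpNorm (fun ω => 1 + (|X ω| + |Y ω|) ^ p) (2 * s) μ ≤
      1 + (eLpNorm X κ μ + eLpNorm Y κ μ) ^ p := by
    calc eLpNorm (fun ω => 1 + (|X ω| + |Y ω|) ^ p) (2 * s) μ
        = eLpNorm (fun ω => 1 + |(|X ω| + |Y ω|)| ^ p) (2 * s) μ := by
          congr 1; funext ω
          rw [abs_of_nonneg (add_nonneg (abs_nonneg (X ω)) (abs_nonneg (Y ω)))]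
      _ ≤ 1 + eLpNorm (fun ω => |X ω| + |Y ω|) κ μ ^ p := by
          grw [eLpNorm_one_add_abs_rpow_le hXY (hs.trans (le_mul_of_one_le_left' one_le_two)) hp,
            eLpNorm_le_eLpNorm_of_exponent_le hsp hXY]
      _ ≤ 1 + (eLpNorm X κ μ + eLpNorm Y κ μ) ^ p := by
          have htri : eLpNorm (fun ω => |X ω| + |Y ω|) κ μ ≤ eLpNorm X κ μ + eLpNorm Y κ μ := by
            have := eLpNorm_add_le hX.norm hY.norm hκ
            rw [eLpNorm_norm, eLpNorm_norm] at this
            exact this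
          grw [htri]
  have hsecond : eLpNorm (fun ω => Y ω ^ 2) (2 * s) μ ≤ eLpNorm Y κ μ ^ 2 := by
    have := eLpNorm_norm_rpow (p := 2 * s) (μ := μ) Y two_pos
    simp only [Real.norm_eq_abs, Real.rpow_two, sq_abs] at this
    rw [this, ← ENNReal.rpow_two]
    grw [eLpNorm_le_eLpNorm_of_exponent_le (by simpa using hsκ) hY]
  calc eLpNorm (fun ω => (1 + (|X ω| + |Y ω|) ^ p) * Y ω ^ 2) s μ
      ≤ eLpNorm (fun ω => 1 + (|X ω| + |Y ω|) ^ p) (2 * s) μ *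
          eLpNorm (fun ω => Y ω ^ 2) (2 * s) μ :=
        eLpNorm_mul_le_eLpNorm_two_mul (aestronglyMeasurable_const.add
          (hXY.aemeasurable.pow_const p).aestronglyMeasurable)
          (hY.aemeasurable.pow_const 2).aestronglyMeasurable s
    _ ≤ _ := by grw [hfirst, hsecond]

section SlopeRemainder

variable [IsProbabilityMeasure μ] {f : ℝ → ℝ} (hf : Differentiable ℝ f)
  (hf' : Differentiable ℝ (deriv f)) {C p : ℝ} (hC : 0 ≤ C) (hp : 0 < p)
  (hf1 : ∀ x, |deriv f x| ≤ C * (1 + |x| ^ p))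
  (hf2 : ∀ x, |deriv (deriv f) x| ≤ C * (1 + |x| ^ p))
  {s κ : ℝ≥0∞} (hs : 1 ≤ s) (hsp : 2 * s * ENNReal.ofReal p ≤ κ) (hsκ : 2 * s * 2 ≤ κ)
include hf hf' hC hp hf2 hs hsp hsκ

theorem eLpNorm_slope_sub_deriv_mul_le {X Y : Ω → ℝ} (hX : AEStronglyMeasurable X μ)
    (hY : AEStronglyMeasurable Y μ) {t : ℝ} (ht : 0 < t) (ht1 : t ≤ 1) :
    eLpNorm (fun ω => (f (X ω + t * Y ω) - f (X ω)) / t - deriv f (X ω) * Y ω) s μ ≤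
      ENNReal.ofReal (t * C) * ((1 + (eLpNorm X κ μ + eLpNorm Y κ μ) ^ p) * eLpNorm Y κ μ ^ 2) :=
  calc eLpNorm (fun ω => (f (X ω + t * Y ω) - f (X ω)) / t - deriv f (X ω) * Y ω) s μ
      ≤ eLpNorm (fun ω => (t * C) * ((1 + (|X ω| + |Y ω|) ^ p) * Y ω ^ 2)) s μ :=
        eLpNorm_mono_real fun ω =>
          (abs_slope_sub_deriv_mul_le hf hf' hC hp.le hf2 ht ht1).trans_eq (by ring)
    _ = ENNReal.ofReal (t * C) * eLpNorm (fun ω => (1 + (|X ω| + |Y ω|) ^ p) * Y ω ^ 2) s μ := by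
        rw [← Real.enorm_of_nonneg (by positivity)]
        exact eLpNorm_const_smul (t * C) _ s μ
    _ ≤ _ := by grw [eLpNorm_one_add_abs_add_abs_rpow_mul_sq_le hX hY hp hs hsp hsκ]

theorem eLpNorm_slope_sub_deriv_mul_le_add {X Y H : Ω → ℝ} (hX : MemLp X κ μ)
    (hY : AEStronglyMeasurable Y μ) (hH : AEStronglyMeasurable H μ) {t : ℝ} (ht : 0 < t)
    (ht1 : t ≤ 1) :
    eLpNorm (fun ω => (f (X ω + t * Y ω) - f (X ω)) / t - deriv f (X ω) * H ω) s μ ≤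
      ENNReal.ofReal (t * C) * ((1 + (eLpNorm X κ μ + eLpNorm Y κ μ) ^ p) * eLpNorm Y κ μ ^ 2) +
        eLpNorm (fun ω => deriv f (X ω)) (2 * s) μ * eLpNorm (Y - H) κ μ := by
  have hfc := hf.continuous
  have hfc' := hf'.continuous
  have hXm := hX.1
  calc eLpNorm (fun ω => (f (X ω + t * Y ω) - f (X ω)) / t - deriv f (X ω) * H ω) s μ
      = eLpNorm ((fun ω => (f (X ω + t * Y ω) - f (X ω)) / t - deriv f (X ω) * Y ω) +
          fun ω => deriv f (X ω) * (Y - H) ω) s μ := by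
        congr 1; funext ω; simp only [Pi.add_apply, Pi.sub_apply]; ring
    _ ≤ eLpNorm (fun ω => (f (X ω + t * Y ω) - f (X ω)) / t - deriv f (X ω) * Y ω) s μ +
          eLpNorm (fun ω => deriv f (X ω) * (Y - H) ω) s μ :=
        eLpNorm_add_le (by fun_prop) (by fun_prop) hs
    _ ≤ _ := by
        grw [eLpNorm_slope_sub_deriv_mul_le hf hf' hC hp hf2 hs hsp hsκ hX.1 hY ht ht1,
          eLpNorm_mul_le_eLpNorm_two_mul (by fun_prop) (hY.sub hH),
          eLpNorm_le_eLpNorm_of_exponent_le ((le_mul_of_one_le_right' one_le_two).trans hsκ)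
            (hY.sub hH)]

include hf1 in
theorem tendsto_eLpNorm_slope_sub_deriv_mul {X H : Ω → ℝ} {Hseq : ℕ → Ω → ℝ}
    (hX : MemLp X κ μ) (hH : MemLp H κ μ) (hHseq : ∀ n, AEStronglyMeasurable (Hseq n) μ)
    (hconv : Tendsto (fun n => eLpNorm (Hseq n - H) κ μ) atTop (𝓝 0)) {t : ℕ → ℝ}
    (htpos : ∀ n, 0 < t n) (ht : Tendsto t atTop (𝓝 0)) :
    Tendsto (fun n => eLpNorm (fun ω =>
      (f (X ω + t n * Hseq n ω) - f (X ω)) / t n - deriv f (X ω) * H ω) s μ) atTop (𝓝 0) := by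
  have hκ : 1 ≤ κ := hs.trans <| (le_mul_of_one_le_left' one_le_two).trans <|
    (le_mul_of_one_le_right' one_le_two).trans hsκ
  set M := eLpNorm H κ μ + 1
  set K := ENNReal.ofReal C * ((1 + (eLpNorm X κ μ + M) ^ p) * M ^ 2)
  set G := eLpNorm (fun ω => deriv f (X ω)) (2 * s) μ
  have hK : K ≠ ∞ := by
    have := hX.eLpNorm_ne_top
    have := hH.eLpNorm_ne_top
    finiteness
  have hG : G ≠ ∞ := (memLp_comp_of_abs_le_mul_one_add_rpow hf'.continuous hp hf1 hX
    (hs.trans (le_mul_of_one_le_left' one_le_two)) hsp).eLpNorm_ne_top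
  have hbound : ∀ᶠ n in atTop, eLpNorm (fun ω =>
      (f (X ω + t n * Hseq n ω) - f (X ω)) / t n - deriv f (X ω) * H ω) s μ ≤
        ENNReal.ofReal (t n) * K + G * eLpNorm (Hseq n - H) κ μ := by
    filter_upwards [ht.eventually_le_const zero_lt_one, hconv.eventually_le_const zero_lt_one]
      with n ht1 hclose
    have hHn : eLpNorm (Hseq n) κ μ ≤ M := calc
      eLpNorm (Hseq n) κ μ = eLpNorm (H + (Hseq n - H)) κ μ := by rw [add_sub_cancel]
      _ ≤ eLpNorm H κ μ + eLpNorm (Hseq n - H) κ μ :=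
        eLpNorm_add_le hH.1 ((hHseq n).sub hH.1) hκ
      _ ≤ eLpNorm H κ μ + 1 := by gcongr
    grw [eLpNorm_slope_sub_deriv_mul_le_add hf hf' hC hp hf2 hs hsp hsκ hX (hHseq n) hH.1
      (htpos n) ht1, hHn, ENNReal.ofReal_mul (htpos n).le, mul_assoc]
  have hlim : Tendsto (fun n => ENNReal.ofReal (t n) * K + G * eLpNorm (Hseq n - H) κ μ)
      atTop (𝓝 0) := by
    simpa using (ENNReal.Tendsto.mul_const (ENNReal.tendsto_ofReal ht) (Or.inr hK)).add
      (ENNReal.Tendsto.const_mul hconv (Or.inr hG))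
  exact tendsto_of_tendsto_of_tendsto_of_le_of_le' tendsto_const_nhds hlim
    (Eventually.of_forall fun n => zero_le) hbound

end SlopeRemainder

end MeasureTheory

theorem nemytskii_hadamard_differentiable_general
    {Ω : Type*} [MeasurableSpace Ω] (ℙ : Measure Ω) [IsProbabilityMeasure ℙ]
    (f : ℝ → ℝ) (hf : ContDiff ℝ 2 f)
    (C p : ℝ) (hC : 0 ≤ C) (hp : 1 ≤ p)
    (hf1 : ∀ x : ℝ, |deriv f x| ≤ C * (1 + |x| ^ p))
    (hf2 : ∀ x : ℝ, |deriv (deriv f) x| ≤ C * (1 + |x| ^ p))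
    (r q : ℝ) (hr : 1 ≤ r) (hq : max (2 * p * r) (4 * r) ≤ q)
    (X H : Ω → ℝ) (Hseq : ℕ → Ω → ℝ)
    (hX : Measurable X) (hH : Measurable H) (hHseq : ∀ n, Measurable (Hseq n))
    (hXq : Integrable (fun ω => |X ω| ^ q) ℙ)
    (hHq : Integrable (fun ω => |H ω| ^ q) ℙ)
    (hHseqq : ∀ n, Integrable (fun ω => |Hseq n ω| ^ q) ℙ)
    (hconv : Tendsto (fun n => (∫ ω, |Hseq n ω - H ω| ^ q ∂ℙ) ^ (1 / q)) atTop (nhds 0))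
    (t : ℕ → ℝ) (htpos : ∀ n, 0 < t n) (ht : Tendsto t atTop (nhds 0)) :
    Tendsto
      (fun n =>
        (∫ ω, |(f (X ω + t n * Hseq n ω) - f (X ω)) / t n - deriv f (X ω) * H ω| ^ r ∂ℙ)
          ^ (1 / r))
      atTop (nhds 0) := by
  have hp0 : 0 < p := zero_lt_one.trans_le hp
  have hq0 : 0 < q := by linarith [le_max_right (2 * p * r) (4 * r)]
  have hfd : Differentiable ℝ f := hf.differentiable two_ne_zero
  have hf' : Differentiable ℝ (deriv f) := (hf.iterate_deriv' 1 1).differentiable one_ne_zero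
  have hexp : ∀ a : ℝ, 0 ≤ a → 2 * r * a ≤ q →
      2 * ENNReal.ofReal r * ENNReal.ofReal a ≤ ENNReal.ofReal q := fun a ha h => by
    rw [← ENNReal.ofReal_ofNat, ← ENNReal.ofReal_mul zero_le_two,
      ← ENNReal.ofReal_mul (by positivity)]
    exact ENNReal.ofReal_le_ofReal h
  have hXm := memLp_of_integrable_abs_rpow hX.aestronglyMeasurable hq0 hXq
  have hHm := memLp_of_integrable_abs_rpow hH.aestronglyMeasurable hq0 hHq
  have hconv' : Tendsto (fun n => eLpNorm (Hseq n - H) (ENNReal.ofReal q) ℙ) atTop (𝓝 0) := by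
    refine (ENNReal.tendsto_toReal_iff (fun n => ((memLp_of_integrable_abs_rpow
      (hHseq n).aestronglyMeasurable hq0 (hHseqq n)).sub hHm).eLpNorm_ne_top)
      ENNReal.zero_ne_top).mp ?_
    exact hconv.congr fun n =>
      integral_abs_rpow_rpow_one_div ((hHseq n).sub hH).aestronglyMeasurable hq0
  have hmain := tendsto_eLpNorm_slope_sub_deriv_mul hfd hf' hC hp0 hf1 hf2
    (ENNReal.one_le_ofReal.mpr hr) (hexp p hp0.le (by linarith [le_max_left (2 * p * r) (4 * r)]))
    (by simpa using hexp 2 zero_le_two (by linarith [le_max_right (2 * p * r) (4 * r)]))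
    hXm hHm (fun n => (hHseq n).aestronglyMeasurable) hconv' htpos ht
  have hfc := hfd.continuous
  have hfc' := hf'.continuous
  refine ((ENNReal.tendsto_toReal ENNReal.zero_ne_top).comp hmain).congr fun n => ?_
  exact (integral_abs_rpow_rpow_one_div (by fun_prop) (zero_lt_one.trans_le hr)).symm

/-- Hadamard differentiability of the Nemytskii map `X ↦ f ∘ X` from `L^q(Ω)` to `L^r(Ω)`:
along any sequence of directions `Hₙ → H` in `L^q` and positive scalars `tₙ → 0`,
the difference quotients converge in `L^r` to `f'(X)·H`. -/
theorem nemytskii_hadamard_differentiable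
    {Ω : Type*} [MeasurableSpace Ω] (ℙ : Measure Ω) [IsProbabilityMeasure ℙ]
    (f : ℝ → ℝ) (hf : ContDiff ℝ 2 f)
    (C p : ℝ) (hC : 0 ≤ C) (hp : 1 ≤ p)
    (hf0 : ∀ x : ℝ, |f x| ≤ C * (1 + |x| ^ p))
    (hf1 : ∀ x : ℝ, |deriv f x| ≤ C * (1 + |x| ^ p))
    (hf2 : ∀ x : ℝ, |deriv (deriv f) x| ≤ C * (1 + |x| ^ p))
    (r q : ℝ) (hr : 1 ≤ r) (hq : max (2 * p * r) (4 * r) ≤ q)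
    (X H : Ω → ℝ) (Hseq : ℕ → Ω → ℝ)
    (hX : Measurable X) (hH : Measurable H) (hHseq : ∀ n, Measurable (Hseq n))
    (hXq : Integrable (fun ω => |X ω| ^ q) ℙ)
    (hHq : Integrable (fun ω => |H ω| ^ q) ℙ)
    (hHseqq : ∀ n, Integrable (fun ω => |Hseq n ω| ^ q) ℙ)
    (hconv : Tendsto (fun n => (∫ ω, |Hseq n ω - H ω| ^ q ∂ℙ) ^ (1 / q)) atTop (nhds 0))
    (t : ℕ → ℝ) (htpos : ∀ n, 0 < t n) (ht : Tendsto t atTop (nhds 0)) :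
    Tendsto
      (fun n =>
        (∫ ω, |(f (X ω + t n * Hseq n ω) - f (X ω)) / t n - deriv f (X ω) * H ω| ^ r ∂ℙ)
          ^ (1 / r))
      atTop (nhds 0) :=
  nemytskii_hadamard_differentiable_general ℙ f hf C p hC hp hf1 hf2 r q hr hq X H Hseq hX hH hHseq
    hXq hHq hHseqq hconv t htpos ht
end

section
/- For every T > 0, every M > 0, every C ≥ 0 and every natural number κ, there exists a constant C' > 0 such that the following holds: for all Borel-measurable functions K, K̄ : [0,T] → ℝ with ∫₀^T K(t)² dt ≤ M and ∫₀^T K̄(t)² dt ≤ M, and every twice continuously differentiable function φ : ℝ → ℝ satisfying |φ(x)| ≤ C(1+|x|^κ), |φ'(x)| ≤ C(1+|x|^κ) and |φ''(x)| ≤ C(1+|x|^κ) for all x ∈ ℝ, one has | ∫ φ dγ_{v̄} − ∫ φ dγ_{v} | ≤ C' ∫₀^T |K̄(t)² − K(t)²| dt, where v = ∫₀^T K(t)² dt and v̄ = ∫₀^T K̄(t)² dt. -/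
/-!
Let `Z` be standard normal and `g s = E[φ (s Z)]`, so that `∫ φ dγ_v = g (√v)`. Differentiating
under the integral, `g' s = E[φ' (s Z) Z] = E[(φ' (s Z) - φ' 0) Z]` because `Z` is centred, and
the mean value theorem with the growth bound on `φ''` makes this at most `L s` for `0 ≤ s ≤ √M`,
where `L = C E[Z² + √M ^ κ |Z| ^ (κ + 2)]`.
Integrating `L s` between `√v` and `√v̄` gives `|g (√v̄) - g (√v)| ≤ L / 2 * |v̄ - v|`, and
`|v̄ - v| ≤ ∫ |K̄² - K²|`.
-/

open MeasureTheory ProbabilityTheory Real Set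
open scoped NNReal

lemma integrable_abs_pow_gaussianReal (μ : ℝ) (v : ℝ≥0) (n : ℕ) :
    Integrable (fun x : ℝ => |x| ^ n) (gaussianReal μ v) := by
  simpa using (memLp_id_gaussianReal (μ := μ) (v := v) n).integrable_norm_pow'

lemma mul_one_add_abs_mul_pow_le {C R s : ℝ} (hC : 0 ≤ C) (hs : |s| ≤ R) (κ : ℕ) (x : ℝ) :
    C * (1 + |s * x| ^ κ) ≤ C * (1 + R ^ κ * |x| ^ κ) := by
  rw [abs_mul, mul_pow]
  gcongr

lemma abs_sub_apply_zero_le_of_abs_deriv_le {f : ℝ → ℝ} (hf : Differentiable ℝ f) {C : ℝ}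
    {κ : ℕ} (hC : 0 ≤ C) (hf' : ∀ x, |deriv f x| ≤ C * (1 + |x| ^ κ)) (y : ℝ) :
    |f y - f 0| ≤ C * (1 + |y| ^ κ) * |y| := by
  have hbound : ∀ t ∈ Metric.closedBall (0 : ℝ) |y|, ‖deriv f t‖ ≤ C * (1 + |y| ^ κ) := by
    intro t ht
    rw [mem_closedBall_zero_iff, norm_eq_abs] at ht
    calc ‖deriv f t‖ ≤ C * (1 + |t| ^ κ) := hf' t
      _ ≤ C * (1 + |y| ^ κ) := by gcongr
  simpa using (convex_closedBall (0 : ℝ) |y|).norm_image_sub_le_of_norm_deriv_le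
    (fun t _ => hf t) hbound (Metric.mem_closedBall_self (abs_nonneg y)) (by simp)

lemma abs_sub_le_of_abs_deriv_le_mul_self {g g' : ℝ → ℝ} {a b L : ℝ} (hab : a ≤ b)
    (hg : ∀ s ∈ Icc a b, HasDerivAt g (g' s) s) (hg' : ∀ s ∈ Icc a b, |g' s| ≤ L * s) :
    |g b - g a| ≤ L / 2 * (b ^ 2 - a ^ 2) := by
  have hB : ∀ s, HasDerivAt (fun s => L / 2 * (s ^ 2 - a ^ 2)) (L * s) s := fun s =>
    (((hasDerivAt_pow 2 s).sub_const (a ^ 2)).const_mul (L / 2)).congr_deriv (by push_cast; ring)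
  refine image_norm_le_of_norm_deriv_right_le_deriv_boundary (f := fun s => g s - g a)
    (fun s hs => ((hg s hs).continuousAt.sub continuousAt_const).continuousWithinAt)
    (fun s hs => ((hg s (Ico_subset_Icc_self hs)).sub_const (g a)).hasDerivWithinAt)
    (by simp) hB (fun s hs => hg' s (Ico_subset_Icc_self hs)) (right_mem_Icc.2 hab)

lemma integral_gaussianReal_eq_integral_sqrt_mul {φ : ℝ → ℝ} {v : ℝ} (hv : 0 ≤ v)
    (hφ : AEStronglyMeasurable φ (gaussianReal 0 v.toNNReal)) :
    ∫ x, φ x ∂gaussianReal 0 v.toNNReal = ∫ x, φ (√v * x) ∂gaussianReal 0 1 := by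
  have hmap : (gaussianReal 0 1).map (√v * ·) = gaussianReal 0 v.toNNReal := by
    rw [gaussianReal_map_const_mul]
    congr 1
    · simp
    · ext
      simp [sq_sqrt hv, Real.coe_toNNReal _ hv]
  rw [← hmap] at hφ ⊢
  exact integral_map (measurable_const_mul _).aemeasurable hφ

section ScaledGaussianIntegral

variable {μ : ℝ} {v : ℝ≥0} {C : ℝ} {κ : ℕ}

lemma hasDerivAt_integral_comp_mul_gaussianReal {φ : ℝ → ℝ} (hφ : Differentiable ℝ φ)
    (hC : 0 ≤ C) (hφ_le : ∀ x, |φ x| ≤ C * (1 + |x| ^ κ))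
    (hφ'_le : ∀ x, |deriv φ x| ≤ C * (1 + |x| ^ κ)) (s₀ : ℝ) :
    HasDerivAt (fun s => ∫ x, φ (s * x) ∂gaussianReal μ v)
      (∫ x, deriv φ (s₀ * x) * x ∂gaussianReal μ v) s₀ := by
  have hmeas : ∀ s, AEStronglyMeasurable (fun x => φ (s * x)) (gaussianReal μ v) := fun s =>
    (hφ.continuous.comp (continuous_const_mul s)).aestronglyMeasurable
  have hint : Integrable (fun x => φ (s₀ * x)) (gaussianReal μ v) := by
    refine ((integrable_const C).add
      ((integrable_abs_pow_gaussianReal μ v κ).const_mul (C * |s₀| ^ κ))).mono' (hmeas s₀) ?_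
    refine .of_forall fun x => (hφ_le (s₀ * x)).trans_eq ?_
    rw [abs_mul, mul_pow, Pi.add_apply]
    ring
  have hbound_int : Integrable (fun x => C * (|x| + (|s₀| + 1) ^ κ * |x| ^ (κ + 1)))
      (gaussianReal μ v) := by
    simpa using ((integrable_abs_pow_gaussianReal μ v 1).add
      ((integrable_abs_pow_gaussianReal μ v (κ + 1)).const_mul ((|s₀| + 1) ^ κ))).const_mul C
  refine (hasDerivAt_integral_of_dominated_loc_of_deriv_le (F' := fun s x => deriv φ (s * x) * x)
    (Metric.ball_mem_nhds s₀ one_pos) (.of_forall hmeas) hint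
    (((measurable_deriv φ).comp (measurable_const_mul s₀)).mul measurable_id).aestronglyMeasurable
    (.of_forall fun x s hs => ?_) hbound_int
    (.of_forall fun x s _ => (hφ (s * x)).hasDerivAt.comp s (hasDerivAt_mul_const x))).2
  have hs : |s| ≤ |s₀| + 1 := by
    have := abs_sub_abs_le_abs_sub s s₀
    rw [Metric.mem_ball, dist_eq] at hs
    linarith
  rw [norm_mul, norm_eq_abs, norm_eq_abs]
  calc |deriv φ (s * x)| * |x| ≤ C * (1 + (|s₀| + 1) ^ κ * |x| ^ κ) * |x| := by
        gcongr
        exact (hφ'_le _).trans (mul_one_add_abs_mul_pow_le hC hs κ x)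
    _ = C * (|x| + (|s₀| + 1) ^ κ * |x| ^ (κ + 1)) := by ring

lemma abs_integral_comp_mul_mul_gaussianReal_le {f : ℝ → ℝ} (hf : Differentiable ℝ f)
    (hC : 0 ≤ C) (hf'_le : ∀ x, |deriv f x| ≤ C * (1 + |x| ^ κ)) {R s : ℝ} (hs₀ : 0 ≤ s)
    (hsR : s ≤ R) :
    |∫ x, f (s * x) * x ∂gaussianReal 0 v| ≤
      C * (∫ x, (|x| ^ 2 + R ^ κ * |x| ^ (κ + 2)) ∂gaussianReal 0 v) * s := by
  have hmoment : Integrable (fun x => |x| ^ 2 + R ^ κ * |x| ^ (κ + 2)) (gaussianReal 0 v) :=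
    (integrable_abs_pow_gaussianReal 0 v 2).add
      ((integrable_abs_pow_gaussianReal 0 v (κ + 2)).const_mul _)
  have hle : ∀ x, ‖(f (s * x) - f 0) * x‖ ≤ s * C * (|x| ^ 2 + R ^ κ * |x| ^ (κ + 2)) := by
    intro x
    have hsx : |s * x| = s * |x| := by rw [abs_mul, abs_of_nonneg hs₀]
    rw [norm_mul, norm_eq_abs, norm_eq_abs]
    calc |f (s * x) - f 0| * |x| ≤ C * (1 + R ^ κ * |x| ^ κ) * |s * x| * |x| := by
          gcongr
          exact (abs_sub_apply_zero_le_of_abs_deriv_le hf hC hf'_le _).trans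
            (mul_le_mul_of_nonneg_right (mul_one_add_abs_mul_pow_le hC
              ((abs_of_nonneg hs₀).trans_le hsR) κ x) (abs_nonneg _))
      _ = s * C * (|x| ^ 2 + R ^ κ * |x| ^ (κ + 2)) := by rw [hsx]; ring
  have hcentered : Integrable (fun x => (f (s * x) - f 0) * x) (gaussianReal 0 v) :=
    (hmoment.const_mul (s * C)).mono' (by have := hf.continuous; fun_prop)
      (.of_forall hle)
  have hlinear : Integrable (fun x => f 0 * x) (gaussianReal 0 v) :=
    ((memLp_id_gaussianReal 1).integrable le_rfl).const_mul _
  have hmean_zero : ∫ x, f (s * x) * x ∂gaussianReal 0 v =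
      ∫ x, (f (s * x) - f 0) * x ∂gaussianReal 0 v := by
    have : (fun x => f (s * x) * x) = fun x => (f (s * x) - f 0) * x + f 0 * x := by
      ext x; ring
    rw [this, integral_add hcentered hlinear, integral_const_mul, integral_id_gaussianReal,
      mul_zero, add_zero]
  rw [hmean_zero, ← norm_eq_abs]
  refine (norm_integral_le_of_norm_le (hmoment.const_mul (s * C)) (.of_forall hle)).trans_eq ?_
  rw [integral_const_mul]
  ring

end ScaledGaussianIntegral

theorem abs_integral_gaussianReal_sub_le {φ : ℝ → ℝ} (hφ : ContDiff ℝ 2 φ) {C M : ℝ} {κ : ℕ}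
    (hC : 0 ≤ C) (hφ_le : ∀ x, |φ x| ≤ C * (1 + |x| ^ κ))
    (hφ'_le : ∀ x, |deriv φ x| ≤ C * (1 + |x| ^ κ))
    (hφ''_le : ∀ x, |deriv (deriv φ) x| ≤ C * (1 + |x| ^ κ)) {v w : ℝ} (hv : 0 ≤ v) (hw : 0 ≤ w)
    (hvM : v ≤ M) (hwM : w ≤ M) :
    |∫ x, φ x ∂gaussianReal 0 w.toNNReal - ∫ x, φ x ∂gaussianReal 0 v.toNNReal| ≤
      C * (∫ x, (|x| ^ 2 + √M ^ κ * |x| ^ (κ + 2)) ∂gaussianReal 0 1) / 2 * |w - v| := by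
  wlog hvw : v ≤ w generalizing v w
  · rw [abs_sub_comm, abs_sub_comm w]
    exact this hw hv hwM hvM (le_of_not_ge hvw)
  have hφ₁ : Differentiable ℝ φ := hφ.differentiable (by norm_num)
  have hφ₂ : Differentiable ℝ (deriv φ) :=
    ((contDiff_succ_iff_deriv (n := 1)).1 hφ).2.2.differentiable one_ne_zero
  rw [integral_gaussianReal_eq_integral_sqrt_mul hw hφ₁.continuous.aestronglyMeasurable,
    integral_gaussianReal_eq_integral_sqrt_mul hv hφ₁.continuous.aestronglyMeasurable,
    abs_of_nonneg (sub_nonneg.2 hvw)]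
  refine (abs_sub_le_of_abs_deriv_le_mul_self (sqrt_le_sqrt hvw)
    (fun s _ => hasDerivAt_integral_comp_mul_gaussianReal hφ₁ hC hφ_le hφ'_le s)
    (fun s hs => abs_integral_comp_mul_mul_gaussianReal_le hφ₂ hC hφ''_le
      ((sqrt_nonneg v).trans hs.1) (hs.2.trans (sqrt_le_sqrt hwM)))).trans_eq ?_
  rw [sq_sqrt hw, sq_sqrt hv]

theorem gaussian_weak_error_kernel_squares_general
    (T M C : ℝ) (hC : 0 ≤ C) (κ : ℕ) :
    ∃ C' > 0, ∀ (K Kb : ℝ → ℝ), Measurable K → Measurable Kb →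
      IntegrableOn (fun t => K t ^ 2) (Set.Ioc 0 T) →
      IntegrableOn (fun t => Kb t ^ 2) (Set.Ioc 0 T) →
      (∫ t in Set.Ioc (0 : ℝ) T, K t ^ 2) ≤ M →
      (∫ t in Set.Ioc (0 : ℝ) T, Kb t ^ 2) ≤ M →
      ∀ φ : ℝ → ℝ, ContDiff ℝ 2 φ →
        (∀ x : ℝ, |φ x| ≤ C * (1 + |x| ^ κ)) →
        (∀ x : ℝ, |deriv φ x| ≤ C * (1 + |x| ^ κ)) →
        (∀ x : ℝ, |deriv (deriv φ) x| ≤ C * (1 + |x| ^ κ)) →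
        |(∫ x, φ x ∂(gaussianReal 0 (∫ t in Set.Ioc (0 : ℝ) T, Kb t ^ 2).toNNReal)) -
            ∫ x, φ x ∂(gaussianReal 0 (∫ t in Set.Ioc (0 : ℝ) T, K t ^ 2).toNNReal)| ≤
          C' * ∫ t in Set.Ioc (0 : ℝ) T, |Kb t ^ 2 - K t ^ 2| := by
  set L := C * (∫ x, (|x| ^ 2 + √M ^ κ * |x| ^ (κ + 2)) ∂gaussianReal 0 1) / 2
  have hL : 0 ≤ L := by positivity
  refine ⟨L + 1, by positivity, ?_⟩
  intro K Kb _ _ hK hKb hKM hKbM φ hφ hφ_le hφ'_le hφ''_le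
  have hvariance : |(∫ t in Ioc 0 T, Kb t ^ 2) - ∫ t in Ioc 0 T, K t ^ 2| ≤
      ∫ t in Ioc 0 T, |Kb t ^ 2 - K t ^ 2| := by
    rw [← integral_sub hKb hK]
    exact abs_integral_le_integral_abs
  calc _ ≤ L * |(∫ t in Ioc 0 T, Kb t ^ 2) - ∫ t in Ioc 0 T, K t ^ 2| :=
        abs_integral_gaussianReal_sub_le hφ hC hφ_le hφ'_le hφ''_le
          (integral_nonneg fun _ => sq_nonneg _) (integral_nonneg fun _ => sq_nonneg _) hKM hKbM
    _ ≤ (L + 1) * ∫ t in Ioc 0 T, |Kb t ^ 2 - K t ^ 2| := by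
        gcongr
        linarith

/-- Weak error bound between two Gaussian Volterra marginals: the difference of the expectations
of `φ` under the centered Gaussian laws with variances `∫₀ᵀ K̄²` and `∫₀ᵀ K²` is controlled by
the `L¹` norm of `K̄² - K²`, with a constant depending only on `T`, `M`, `C`, `κ`. -/
theorem gaussian_weak_error_kernel_squares
    (T M C : ℝ) (hT : 0 < T) (hM : 0 < M) (hC : 0 ≤ C) (κ : ℕ) :
    ∃ C' > 0, ∀ (K Kb : ℝ → ℝ), Measurable K → Measurable Kb →
      IntegrableOn (fun t => K t ^ 2) (Set.Ioc 0 T) →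
      IntegrableOn (fun t => Kb t ^ 2) (Set.Ioc 0 T) →
      (∫ t in Set.Ioc (0 : ℝ) T, K t ^ 2) ≤ M →
      (∫ t in Set.Ioc (0 : ℝ) T, Kb t ^ 2) ≤ M →
      ∀ φ : ℝ → ℝ, ContDiff ℝ 2 φ →
        (∀ x : ℝ, |φ x| ≤ C * (1 + |x| ^ κ)) →
        (∀ x : ℝ, |deriv φ x| ≤ C * (1 + |x| ^ κ)) →
        (∀ x : ℝ, |deriv (deriv φ) x| ≤ C * (1 + |x| ^ κ)) →
        |(∫ x, φ x ∂(gaussianReal 0 (∫ t in Set.Ioc (0 : ℝ) T, Kb t ^ 2).toNNReal)) -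
            ∫ x, φ x ∂(gaussianReal 0 (∫ t in Set.Ioc (0 : ℝ) T, K t ^ 2).toNNReal)| ≤
          C' * ∫ t in Set.Ioc (0 : ℝ) T, |Kb t ^ 2 - K t ^ 2| :=
  gaussian_weak_error_kernel_squares_general T M C hC κ
end

section
/- Let φ : ℝ → ℝ be twice continuously differentiable and suppose there exist C ≥ 0 and a natural number κ such that |φ(x)| ≤ C(1+|x|^κ), |φ'(x)| ≤ C(1+|x|^κ) and |φ''(x)| ≤ C(1+|x|^κ) for all x ∈ ℝ. Then the function v ↦ ∫ φ dγ_v is differentiable at every v > 0, with derivative (1/2) ∫ φ'' dγ_v. -/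
/-!
Writing `γ_w` as the image of `γ_1` under `x ↦ √w x` turns the expectation into
`∫ φ (√w x) dγ_1`, which may be differentiated under the integral sign: for `√w` in a bounded
neighbourhood, `x φ' (√w x)` is dominated by a polynomial, and polynomials are `γ_1`-integrable.
By the chain rule for `√·` the derivative is `(2√v)⁻¹ ∫ x φ' (√v x) dγ_1 = (2v)⁻¹ ∫ x φ' x dγ_v`,
and Stein's identity `∫ x g dγ_v = v ∫ g' dγ_v` (integration by parts against the Gaussian
density `p`, which satisfies `p' = -(x / v) p`) turns this into `½ ∫ φ'' dγ_v`.
-/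

open MeasureTheory ProbabilityTheory Real Filter Metric
open scoped NNReal Topology

section GrowthBounds

variable {f : ℝ → ℝ} {C : ℝ} {k : ℕ}

lemma nonneg_of_abs_le_mul_one_add_pow (hf : ∀ x, |f x| ≤ C * (1 + |x| ^ k)) : 0 ≤ C :=
  nonneg_of_mul_nonneg_left ((abs_nonneg _).trans (hf 0)) (by positivity)

lemma abs_comp_const_mul_le (hf : ∀ x, |f x| ≤ C * (1 + |x| ^ k)) {t T : ℝ} (ht : |t| ≤ T)
    (x : ℝ) :
    |f (t * x)| ≤ C * (1 + T ^ k) * (1 + |x| ^ k) := by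
  have hC := nonneg_of_abs_le_mul_one_add_pow hf
  have htk : |t| ^ k ≤ T ^ k := pow_le_pow_left₀ (abs_nonneg t) ht k
  calc |f (t * x)| ≤ C * (1 + |t| ^ k * |x| ^ k) := by simpa [abs_mul, mul_pow] using hf (t * x)
    _ ≤ C * (1 + T ^ k * |x| ^ k) := by gcongr
    _ ≤ C * (1 + T ^ k) * (1 + |x| ^ k) := by
      have : 0 ≤ T ^ k := (pow_nonneg (abs_nonneg t) k).trans htk
      nlinarith [pow_nonneg (abs_nonneg x) k]

lemma abs_le_one_add_pow_succ (x : ℝ) (k : ℕ) : |x| ≤ 1 + |x| ^ (k + 1) := by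
  rcases le_total |x| 1 with h | h
  · linarith [pow_nonneg (abs_nonneg x) (k + 1)]
  · linarith [le_self_pow₀ h k.add_one_ne_zero]

lemma abs_id_mul_le (hf : ∀ x, |f x| ≤ C * (1 + |x| ^ k)) (x : ℝ) :
    |x * f x| ≤ 2 * C * (1 + |x| ^ (k + 1)) := by
  have hC := nonneg_of_abs_le_mul_one_add_pow hf
  calc |x * f x| ≤ |x| * (C * (1 + |x| ^ k)) := by
        rw [abs_mul]; exact mul_le_mul_of_nonneg_left (hf x) (abs_nonneg x)
    _ = C * (|x| + |x| ^ (k + 1)) := by ring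
    _ ≤ 2 * C * (1 + |x| ^ (k + 1)) := by
      nlinarith [abs_le_one_add_pow_succ x k, pow_nonneg (abs_nonneg x) (k + 1)]

end GrowthBounds

section GaussianMoments

variable {μ : ℝ} {v : ℝ≥0}

lemma integrable_one_add_abs_pow_gaussianReal (k : ℕ) :
    Integrable (fun x => 1 + |x| ^ k) (gaussianReal μ v) := by
  refine (integrable_const 1).add ?_
  simpa using (memLp_id_gaussianReal (μ := μ) (v := v) k).integrable_norm_pow'

lemma integrable_gaussianReal_of_abs_le {f : ℝ → ℝ} {C : ℝ} {k : ℕ}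
    (hf_meas : AEStronglyMeasurable f (gaussianReal μ v))
    (hf : ∀ x, |f x| ≤ C * (1 + |x| ^ k)) : Integrable f (gaussianReal μ v) :=
  ((integrable_one_add_abs_pow_gaussianReal k).const_mul C).mono' hf_meas (ae_of_all _ hf)

lemma integrable_gaussianReal_iff (hv : v ≠ 0) {f : ℝ → ℝ} :
    Integrable f (gaussianReal μ v) ↔ Integrable (fun x => gaussianPDFReal μ v x * f x) := by
  rw [gaussianReal_of_var_ne_zero μ hv, integrable_withDensity_iff_integrable_smul'
    (measurable_gaussianPDF μ v) (ae_of_all _ fun _ => gaussianPDF_lt_top)]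
  simp [toReal_gaussianPDF]

lemma hasDerivAt_integral_comp_mul_gaussianReal_s4 {f : ℝ → ℝ} {C : ℝ} {k : ℕ}
    (hf : Differentiable ℝ f) (hf_bound : ∀ x, |f x| ≤ C * (1 + |x| ^ k))
    (hf'_bound : ∀ x, |deriv f x| ≤ C * (1 + |x| ^ k)) (t : ℝ) :
    HasDerivAt (fun s => ∫ x, f (s * x) ∂gaussianReal μ v)
      (∫ x, x * deriv f (t * x) ∂gaussianReal μ v) t := by
  set T := |t| + 1
  have hT : ∀ s ∈ ball t 1, |s| ≤ T := fun s hs => by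
    have := abs_sub_abs_le_abs_sub s t
    rw [mem_ball, dist_eq_norm, norm_eq_abs] at hs
    linarith
  have hF_int : Integrable (fun x => f (t * x)) (gaussianReal μ v) :=
    integrable_gaussianReal_of_abs_le
      (hf.continuous.comp (continuous_const_mul t)).aestronglyMeasurable
      (abs_comp_const_mul_le hf_bound (le_add_of_nonneg_right zero_le_one))
  refine (hasDerivAt_integral_of_dominated_loc_of_deriv_le (F := fun s x => f (s * x))
    (F' := fun s x => x * deriv f (s * x)) (ball_mem_nhds t one_pos)
    (.of_forall fun s => (hf.continuous.comp (continuous_const_mul s)).aestronglyMeasurable) hF_int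
    ((measurable_id.mul ((measurable_deriv f).comp (measurable_const_mul t))).aestronglyMeasurable)
    (bound := fun x => 2 * (C * (1 + T ^ k)) * (1 + |x| ^ (k + 1)))
    (ae_of_all _ fun x s hs => abs_id_mul_le (abs_comp_const_mul_le hf'_bound (hT s hs)) x)
    ((integrable_one_add_abs_pow_gaussianReal (k + 1)).const_mul _)
    (ae_of_all _ fun x s _ => ?_)).2
  exact ((hf (s * x)).hasDerivAt.comp s ((hasDerivAt_id s).mul_const x)).congr_deriv
    (by simp [mul_comm])

end GaussianMoments

lemma gaussianReal_map_sqrt_mul {w : ℝ} (hw : 0 ≤ w) :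
    (gaussianReal 0 1).map (√w * ·) = gaussianReal 0 w.toNNReal := by
  rw [gaussianReal_map_const_mul, mul_zero, mul_one]
  congr
  rw [Real.sq_sqrt hw, max_eq_left hw]

lemma integral_gaussianReal_eq_integral_sqrt_mul_s4 {E : Type*} [NormedAddCommGroup E]
    [NormedSpace ℝ E] {w : ℝ} (hw : 0 < w) (f : ℝ → E) :
    ∫ x, f x ∂gaussianReal 0 w.toNNReal = ∫ x, f (√w * x) ∂gaussianReal 0 1 := by
  rw [← gaussianReal_map_sqrt_mul hw.le,
    (measurableEmbedding_mulLeft₀ (sqrt_pos.2 hw).ne').integral_map]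

lemma hasDerivAt_gaussianPDFReal (μ : ℝ) (v : ℝ≥0) (x : ℝ) :
    HasDerivAt (gaussianPDFReal μ v) (-((x - μ) / v) * gaussianPDFReal μ v x) x := by
  rw [gaussianPDFReal_def]
  have hexp : HasDerivAt (fun x => -(x - μ) ^ 2 / (2 * (v : ℝ))) (-((x - μ) / v)) x := by
    refine (((hasDerivAt_id' x).sub_const μ).pow 2).neg.div_const (2 * (v : ℝ)) |>.congr_deriv ?_
    ring
  exact (hexp.exp.const_mul (√(2 * π * v))⁻¹).congr_deriv (by ring)

lemma integral_mul_eq_mul_integral_deriv_gaussianReal {v : ℝ≥0} {g : ℝ → ℝ} {C : ℝ} {k : ℕ}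
    (hg : Differentiable ℝ g) (hg_bound : ∀ x, |g x| ≤ C * (1 + |x| ^ k))
    (hg'_bound : ∀ x, |deriv g x| ≤ C * (1 + |x| ^ k)) :
    ∫ x, x * g x ∂gaussianReal 0 v = v * ∫ x, deriv g x ∂gaussianReal 0 v := by
  rcases eq_or_ne v 0 with rfl | hv
  · simp [gaussianReal_zero_var]
  set p := gaussianPDFReal 0 v
  have hg_int : Integrable g (gaussianReal 0 v) :=
    integrable_gaussianReal_of_abs_le hg.continuous.aestronglyMeasurable hg_bound
  have hg'_int : Integrable (deriv g) (gaussianReal 0 v) :=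
    integrable_gaussianReal_of_abs_le (measurable_deriv g).aestronglyMeasurable hg'_bound
  have hxg_int : Integrable (fun x => x * g x) (gaussianReal 0 v) :=
    integrable_gaussianReal_of_abs_le (by fun_prop) (abs_id_mul_le hg_bound)
  rw [integrable_gaussianReal_iff hv] at hg_int hg'_int hxg_int
  have hp'g_int : Integrable (fun x => -((x - 0) / v) * p x * g x) :=
    (hxg_int.const_mul (-(v : ℝ)⁻¹)).congr (ae_of_all _ fun x => by simp only; ring)
  have ibp := integral_mul_deriv_eq_deriv_mul_of_integrable
    (fun x _ => hasDerivAt_gaussianPDFReal 0 v x) (fun x _ => (hg x).hasDerivAt)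
    hg'_int hp'g_int hg_int
  simp only [integral_gaussianReal_eq_integral_smul hv, smul_eq_mul]
  rw [ibp, ← integral_neg, ← integral_const_mul]
  congr 1 with x
  field_simp
  ring

theorem gaussian_expectation_hasDerivAt_variance_general
    (φ : ℝ → ℝ) (hφ : ContDiff ℝ 2 φ)
    (C : ℝ) (κ : ℕ)
    (h0 : ∀ x : ℝ, |φ x| ≤ C * (1 + |x| ^ κ))
    (h1 : ∀ x : ℝ, |deriv φ x| ≤ C * (1 + |x| ^ κ))
    (h2 : ∀ x : ℝ, |deriv (deriv φ) x| ≤ C * (1 + |x| ^ κ))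
    (v : ℝ) (hv : 0 < v) :
    HasDerivAt (fun w : ℝ => ∫ x, φ x ∂(gaussianReal 0 (Real.toNNReal w)))
      ((1 / 2) * ∫ x, deriv (deriv φ) x ∂(gaussianReal 0 (Real.toNNReal v))) v := by
  have hscale : (fun w : ℝ => ∫ x, φ x ∂gaussianReal 0 w.toNNReal)
      =ᶠ[𝓝 v] (fun t => ∫ x, φ (t * x) ∂gaussianReal 0 1) ∘ sqrt :=
    (eventually_gt_nhds hv).mono fun w hw => integral_gaussianReal_eq_integral_sqrt_mul_s4 hw φ
  have hstein : ∫ x, x * deriv φ (√v * x) ∂gaussianReal 0 1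
      = √v * ∫ x, deriv (deriv φ) x ∂gaussianReal 0 v.toNNReal := by
    calc ∫ x, x * deriv φ (√v * x) ∂gaussianReal 0 1
        = (√v)⁻¹ * ∫ x, √v * x * deriv φ (√v * x) ∂gaussianReal 0 1 := by
          rw [← integral_const_mul]; congr 1 with x; field_simp
      _ = (√v)⁻¹ * (v * ∫ x, deriv (deriv φ) x ∂gaussianReal 0 v.toNNReal) := by
          rw [← integral_gaussianReal_eq_integral_sqrt_mul_s4 hv (fun y => y * deriv φ y),
            integral_mul_eq_mul_integral_deriv_gaussianReal hφ.differentiable_deriv_two h1 h2,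
            coe_toNNReal _ hv.le]
      _ = √v * ∫ x, deriv (deriv φ) x ∂gaussianReal 0 v.toNNReal := by
          rw [← mul_assoc, inv_mul_eq_div, div_sqrt]
  have hderiv := (hasDerivAt_integral_comp_mul_gaussianReal_s4 (μ := 0) (v := 1)
    (hφ.differentiable two_ne_zero) h0 h1 √v).comp v (hasDerivAt_sqrt hv.ne')
  refine (hderiv.congr_of_eventuallyEq hscale).congr_deriv ?_
  rw [hstein]
  field_simp

/-- Differentiability of the Gaussian expectation in the variance parameter: for a `C²`
function `φ` with polynomial growth (together with its first two derivatives), the map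
`v ↦ ∫ φ dγ_v` is differentiable at every `v > 0` with derivative `(1/2) ∫ φ'' dγ_v`. -/
theorem gaussian_expectation_hasDerivAt_variance
    (φ : ℝ → ℝ) (hφ : ContDiff ℝ 2 φ)
    (C : ℝ) (hC : 0 ≤ C) (κ : ℕ)
    (h0 : ∀ x : ℝ, |φ x| ≤ C * (1 + |x| ^ κ))
    (h1 : ∀ x : ℝ, |deriv φ x| ≤ C * (1 + |x| ^ κ))
    (h2 : ∀ x : ℝ, |deriv (deriv φ) x| ≤ C * (1 + |x| ^ κ))
    (v : ℝ) (hv : 0 < v) :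
    HasDerivAt (fun w : ℝ => ∫ x, φ x ∂(gaussianReal 0 (Real.toNNReal w)))
      ((1 / 2) * ∫ x, deriv (deriv φ) x ∂(gaussianReal 0 (Real.toNNReal v))) v :=
  gaussian_expectation_hasDerivAt_variance_general φ hφ C κ h0 h1 h2 v hv
end
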